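/- Let p ≥ 5 be a prime, m a positive integer, and let f : F_{p^m} → F_{p^m} be a PN-DO function. Then the dual code C̄_f^⊥ of the punctured code C̄_f ⊆ F_p^{p^m} has dimension p^m − 2m − 1 over F_p and minimum Hamming distance exactly 4; that is, C̄_f^⊥ is a [p^m, p^m−2m−1, 4] code over F_p. -/

import Mathlib

noncomputable section
open scoped Classical

noncomputable instance (p n : ℕ) [Fact p.Prime] : Fintype (GaloisField p n) :=
  Fintype.ofFinite _

/-- The absolute trace map from `F_{p^m}` to `F_p`. -/
def tr (p m : ℕ) [Fact p.Prime] (x : GaloisField p m) : ZMod p :=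
  Algebra.trace (ZMod p) (GaloisField p m) x

/-- The punctured codeword `(Tr(a f(x)+bx)+c)_{x∈F_{p^m}}` of length `p^m`. -/
def pWord (p m : ℕ) [Fact p.Prime] (f : GaloisField p m → GaloisField p m)
    (a b : GaloisField p m) (c : ZMod p) : GaloisField p m → ZMod p :=
  fun x => tr p m (a * f x + b * x) + c

/-- The dual `C̄_f^⊥` of the punctured code: all vectors orthogonal to every codeword. -/
def pDual (p m : ℕ) [Fact p.Prime] (f : GaloisField p m → GaloisField p m) :
    Set (GaloisField p m → ZMod p) :=
  {v | ∀ (a b : GaloisField p m) (c : ZMod p), ∑ x, v x * pWord p m f a b c x = 0}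

/-!
A DO polynomial is a quadratic form over `𝔽_p`, and a perfect nonlinear quadratic form is
anisotropic. A word `v` is orthogonal to the code iff its syndrome `∑ₓ v x • (1, x, f x)`
vanishes, because every `𝔽_p`-linear functional on `𝔽_p × 𝔽 × 𝔽` is `(s, y, z) ↦ c s + Tr (b y) +
Tr (a z)`. Perfect nonlinearity makes `(a, b, c) ↦ (Tr (a f x + b x) + c)ₓ` injective, so the
syndrome map is onto a space of dimension `2m + 1`. A nonzero kernel word of weight `≤ 3` is
impossible: two or fewer points are excluded by the first two syndrome components, and for three
points `w₂ • ∑ wᵢ • f xᵢ = -(w₁ w₃) • f (x₁ - x₃) ≠ 0`. Finally the third finite difference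
`-[0] + 3[1] - 3[2] + [3]` kills `1`, `k` and `k²`, hence also `f (k • x) = k² • f x`.
-/

open Finset Function

section QuadraticMap

variable {F M N : Type*} [Field F] [AddCommGroup M] [Module F M] [AddCommGroup N] [Module F N]

theorem QuadraticMap.smul_sum_three_eq (Q : QuadraticMap F M N) {w₁ w₂ w₃ : F} {x₁ x₂ x₃ : M}
    (hw : w₁ + w₂ + w₃ = 0) (hx : w₁ • x₁ + w₂ • x₂ + w₃ • x₃ = 0) :
    w₂ • (w₁ • Q x₁ + w₂ • Q x₂ + w₃ • Q x₃) = -(w₁ * w₃) • Q (x₁ - x₃) := by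
  have hw₃ : w₃ = -w₁ - w₂ := by linear_combination hw
  subst hw₃
  have hx₂ : w₂ • (x₂ - x₃) = -(w₁ • (x₁ - x₃)) := by
    rw [← sub_eq_zero, ← hx]; module
  have hQ₂ : (w₂ * w₂) • Q (x₂ - x₃) = (w₁ * w₁) • Q (x₁ - x₃) := by
    rw [← Q.map_smul, hx₂, Q.map_neg, Q.map_smul]
  have hpolar : w₁ • polar Q (x₁ - x₃) x₃ + w₂ • polar Q (x₂ - x₃) x₃ = 0 := by
    rw [← polar_smul_left, ← polar_smul_left, ← polar_add_left, hx₂, add_neg_cancel,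
      polar_zero_left]
  have hsplit : ∀ x, Q x = Q (x - x₃) + Q x₃ + polar Q (x - x₃) x₃ := fun x => by
    rw [polar, sub_add_cancel]; abel
  rw [hsplit x₁, hsplit x₂]
  linear_combination (norm := module) w₂ • hpolar + hQ₂

theorem QuadraticMap.Anisotropic.sum_three_ne_zero {Q : QuadraticMap F M N} (hQ : Q.Anisotropic)
    {w₁ w₂ w₃ : F} {x₁ x₂ x₃ : M} (h₁ : w₁ ≠ 0) (h₃ : w₃ ≠ 0) (h₁₃ : x₁ ≠ x₃)
    (hw : w₁ + w₂ + w₃ = 0) (hx : w₁ • x₁ + w₂ • x₂ + w₃ • x₃ = 0) :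
    w₁ • Q x₁ + w₂ • Q x₂ + w₃ • Q x₃ ≠ 0 := by
  intro h
  have := Q.smul_sum_three_eq hw hx
  rw [h, smul_zero, eq_comm, smul_eq_zero] at this
  rcases this with h₀ | h₀
  · exact mul_ne_zero h₁ h₃ (neg_eq_zero.1 h₀)
  · exact h₁₃ (sub_eq_zero.1 (hQ _ h₀))

end QuadraticMap

def IsPerfectNonlinear {G H : Type*} [AddGroup G] [AddGroup H] (f : G → H) : Prop :=
  ∀ a, a ≠ 0 → ∀ b, ∃! x, f (x + a) - f x = b

theorem IsPerfectNonlinear.apply_ne_apply_zero {G H : Type*} [AddGroup G] [AddGroup H]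
    {f : G → H} (hf : IsPerfectNonlinear f) (heven : ∀ x, f (-x) = f x) {a : G} (ha : a ≠ 0) :
    f a ≠ f 0 := by
  intro h
  obtain ⟨x, -, huniq⟩ := hf a ha 0
  have h₀ : f (0 + a) - f 0 = 0 := by rw [zero_add, h, sub_self]
  have hneg : f (-a + a) - f (-a) = 0 := by rw [neg_add_cancel, heven, h, sub_self]
  exact ha (neg_eq_zero.1 ((huniq _ hneg).trans (huniq _ h₀).symm))

theorem QuadraticMap.anisotropic_of_isPerfectNonlinear {R M : Type*} [CommRing R]
    [AddCommGroup M] [Module R M] {Q : QuadraticMap R M M} (hQ : IsPerfectNonlinear Q) :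
    Q.Anisotropic := fun x hx => by
  by_contra hx₀
  exact hQ.apply_ne_apply_zero Q.map_neg hx₀ (by rw [hx, Q.map_zero])

section Syndrome

variable (F : Type*) {M N : Type*} [Field F] [AddCommGroup M] [Module F M] [Fintype M]
  [AddCommGroup N] [Module F N]

def syndrome (f : M → N) : (M → F) →ₗ[F] F × M × N :=
  Fintype.linearCombination F fun x => (1, x, f x)

variable {F}

theorem syndrome_eq_zero_iff {f : M → N} {v : M → F} :
    syndrome F f v = 0 ↔ ∑ x, v x = 0 ∧ ∑ x, v x • x = 0 ∧ ∑ x, v x • f x = 0 := by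
  simp [syndrome, Fintype.linearCombination_apply, Prod.ext_iff, Prod.fst_sum, Prod.snd_sum]

theorem sum_smul_eq_sum_filter_ne_zero [DecidableEq F] {ι : Type*} [Fintype ι] (v : ι → F)
    (g : ι → N) :
    ∑ x, v x • g x = ∑ x with v x ≠ 0, v x • g x :=
  (sum_filter_of_ne (p := (v · ≠ 0)) fun x _ h hx => h (by rw [hx, zero_smul])).symm

theorem four_le_hammingNorm_of_syndrome_eq_zero [DecidableEq F] {Q : QuadraticMap F M N}
    (hQ : Q.Anisotropic) {v : M → F} (hv : syndrome F Q v = 0) (hv₀ : v ≠ 0) :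
    4 ≤ hammingNorm v := by
  obtain ⟨h₁, h₂, h₃⟩ := syndrome_eq_zero_iff.1 hv
  rw [← sum_filter_ne_zero univ] at h₁
  rw [sum_smul_eq_sum_filter_ne_zero] at h₂ h₃
  set s := ({x | v x ≠ 0} : Finset M)
  have hmem : ∀ {x}, x ∈ s → v x ≠ 0 := fun hx => (mem_filter.1 hx).2
  have hs : hammingNorm v = #s := rfl
  have hpos : 0 < #s := hs ▸ hammingNorm_pos_iff.2 hv₀
  by_contra! hlt
  rcases (by omega : #s = 1 ∨ #s = 2 ∨ #s = 3) with h | h | h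
  · obtain ⟨x, hx⟩ := card_eq_one.1 h
    rw [hx, sum_singleton] at h₁
    exact hmem (hx ▸ mem_singleton_self x) h₁
  · obtain ⟨x, y, hxy, hx⟩ := card_eq_two.1 h
    rw [hx, sum_pair hxy] at h₁ h₂
    have : v x • (x - y) = 0 := by
      linear_combination (norm := module) h₂ - h₁ • y
    rcases smul_eq_zero.1 this with h | h
    · exact hmem (by simp [hx]) h
    · exact hxy (sub_eq_zero.1 h)
  · obtain ⟨x, y, z, hxy, hxz, hyz, hx⟩ := card_eq_three.1 h
    simp only [hx, sum_insert, mem_insert, mem_singleton, hxy, hxz, hyz, sum_singleton,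
      or_self, not_false_eq_true, ← add_assoc] at h₁ h₂ h₃
    exact hQ.sum_three_ne_zero (hmem (by simp [hx])) (hmem (by simp [hx])) hxz h₁ h₂ h₃

theorem Fintype.linearCombination_extend {ι κ R P : Type*} [Fintype ι] [Fintype κ]
    [CommSemiring R] [AddCommMonoid P] [Module R P] (g : κ → P) {e : ι → κ} (he : Injective e)
    (c : ι → R) :
    Fintype.linearCombination R g (extend e c 0) = Fintype.linearCombination R (g ∘ e) c := by
  simp only [Fintype.linearCombination_apply]
  refine (Fintype.sum_of_injective e he _ _ (fun y hy => ?_) fun x => ?_).symm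
  · rw [extend_apply' c (0 : κ → R) y hy, Pi.zero_apply, zero_smul]
  · rw [comp_apply, he.extend_apply]

theorem hammingNorm_extend {ι κ R : Type*} [Fintype ι] [Fintype κ] [Zero R] [DecidableEq R]
    {e : ι → κ} (he : Injective e) (c : ι → R) : hammingNorm (extend e c 0) = hammingNorm c := by
  refine (card_nbij e (fun x hx => ?_) he.injOn fun y hy => ?_).symm
  · simpa [he.extend_apply] using hx
  · by_cases h : ∃ x, e x = y
    · obtain ⟨x, rfl⟩ := h
      exact ⟨x, by simpa [he.extend_apply] using hy, rfl⟩
    · simp [extend_apply' c (0 : κ → R) y h] at hy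

theorem exists_syndrome_eq_zero_hammingNorm_eq_four [DecidableEq F] (Q : QuadraticMap F M N)
    (h₂ : (2 : F) ≠ 0) (h₃ : (3 : F) ≠ 0) {x : M} (hx : x ≠ 0) :
    ∃ v : M → F, syndrome F Q v = 0 ∧ hammingNorm v = 4 := by
  set t : Fin 4 → F := ![0, 1, 2, 3]
  set c : Fin 4 → F := ![-1, 3, -3, 1]
  have ht : Injective t := by
    intro i j h
    fin_cases i <;> fin_cases j <;> simp [t] at h ⊢ <;> grind
  have he : Injective (t · • x) := (smul_left_injective F hx).comp ht
  refine ⟨extend (t · • x) c 0, ?_, ?_⟩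
  · rw [syndrome, Fintype.linearCombination_extend _ he, Fintype.linearCombination_apply]
    simp only [comp_apply, Q.map_smul, Prod.smul_mk, smul_eq_mul, mul_one, Fin.sum_univ_four,
      Fin.isValue, Matrix.cons_val_zero, zero_smul, smul_zero, mul_zero, Matrix.cons_val_one,
      one_smul, Prod.mk_add_mk, zero_add, Matrix.cons_val, neg_smul, add_neg_cancel_right,
      neg_add_cancel, Prod.mk_eq_zero, true_and, c, t]
    constructor <;> module
  · rw [hammingNorm_extend he]
    simp [hammingNorm, c, Fin.forall_fin_succ, h₃, filter_true_of_mem]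

end Syndrome

section DembowskiOstrom

variable (p : ℕ) [Fact p.Prime] {L : Type*} [CommRing L] [Algebra (ZMod p) L] {m : ℕ}

def QuadraticMap.dembowskiOstrom (δ : Fin m → Fin m → L) : QuadraticMap (ZMod p) L L :=
  ∑ i, ∑ j, δ i j • linMulLin (FiniteField.frobeniusAlgHom (ZMod p) L ^ (i : ℕ)).toLinearMap
    (FiniteField.frobeniusAlgHom (ZMod p) L ^ (j : ℕ)).toLinearMap

theorem QuadraticMap.dembowskiOstrom_apply (δ : Fin m → Fin m → L) (x : L) :
    dembowskiOstrom p δ x = ∑ i, ∑ j, δ i j * x ^ (p ^ (i : ℕ) + p ^ (j : ℕ)) := by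
  simp [dembowskiOstrom, pow_add, AlgHom.coe_pow, FiniteField.coe_frobeniusAlgHom, pow_iterate,
    ZMod.card]

end DembowskiOstrom

section Code

variable {p m : ℕ} [Fact p.Prime]

local notation "𝔽" => GaloisField p m

theorem eq_zero_of_forall_tr_mul_eq_zero {b : 𝔽} (h : ∀ x, tr p m (b * x) = 0) : b = 0 :=
  (traceForm_nondegenerate (ZMod p) 𝔽).1 b h

theorem eq_zero_of_pWord_eq_zero {f : 𝔽 → 𝔽} (hf : IsPerfectNonlinear f) (h₀ : f 0 = 0)
    {a b : 𝔽} {c : ZMod p} (h : pWord p m f a b c = 0) : a = 0 ∧ b = 0 ∧ c = 0 := by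
  have hword : ∀ x, tr p m (a * f x + b * x) + c = 0 := congrFun h
  obtain rfl : c = 0 := by simpa [h₀, tr] using hword 0
  obtain rfl : a = 0 := by
    by_contra ha
    refine Algebra.trace_ne_zero (ZMod p) 𝔽 (LinearMap.ext fun d => ?_)
    obtain ⟨x, hx, -⟩ := hf 1 one_ne_zero (a⁻¹ * (d - b))
    have hd : d = (a * f (x + 1) + b * (x + 1)) - (a * f x + b * x) := by
      linear_combination -(congrArg (a * ·) hx).trans (mul_inv_cancel_left₀ ha _)
    simpa [hd, tr, add_zero] using congrArg₂ (· - ·) (hword (x + 1)) (hword x)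
  exact ⟨rfl, eq_zero_of_forall_tr_mul_eq_zero fun x => by simpa using hword x, rfl⟩

def codePairing (a b : 𝔽) (c : ZMod p) : Module.Dual (ZMod p) (ZMod p × 𝔽 × 𝔽) :=
  (c • LinearMap.id).coprod
    ((Algebra.traceForm (ZMod p) 𝔽 b).coprod (Algebra.traceForm (ZMod p) 𝔽 a))

theorem pWord_eq_codePairing (f : 𝔽 → 𝔽) (a b : 𝔽) (c : ZMod p) (x : 𝔽) :
    pWord p m f a b c x = codePairing a b c (1, x, f x) := by
  simp [pWord, codePairing, tr, add_comm]

theorem codePairing_surjective (φ : Module.Dual (ZMod p) (ZMod p × 𝔽 × 𝔽)) :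
    ∃ a b c, codePairing a b c = φ := by
  have htoDual := (LinearMap.BilinForm.toDual _ (traceForm_nondegenerate (ZMod p) 𝔽)).surjective
  obtain ⟨b, hb⟩ := htoDual (φ ∘ₗ LinearMap.inr _ _ _ ∘ₗ LinearMap.inl _ _ _)
  obtain ⟨a, ha⟩ := htoDual (φ ∘ₗ LinearMap.inr _ _ _ ∘ₗ LinearMap.inr _ _ _)
  refine ⟨a, b, φ (1, 0), ?_⟩
  ext y
  · simp [codePairing]
  · simpa [codePairing, LinearMap.BilinForm.toDual_def] using LinearMap.congr_fun hb y
  · simpa [codePairing, LinearMap.BilinForm.toDual_def] using LinearMap.congr_fun ha y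

theorem mem_pDual_iff {f : 𝔽 → 𝔽} {v : 𝔽 → ZMod p} :
    v ∈ pDual p m f ↔ syndrome (ZMod p) f v = 0 := by
  have hsum : ∀ a b c,
      ∑ x, v x * pWord p m f a b c x = codePairing a b c (syndrome (ZMod p) f v) := by
    intro a b c
    simp only [syndrome, Fintype.linearCombination_apply, map_sum, map_smul, smul_eq_mul,
      pWord_eq_codePairing]
  refine ⟨fun hv => ?_, fun hv a b c => by rw [hsum, hv, map_zero]⟩
  refine (Module.forall_dual_apply_eq_zero_iff (ZMod p) _).1 fun φ => ?_
  obtain ⟨a, b, c, rfl⟩ := codePairing_surjective φ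
  rw [← hsum]
  exact hv a b c

theorem syndrome_surjective {f : 𝔽 → 𝔽} (hf : IsPerfectNonlinear f) (h₀ : f 0 = 0) :
    Surjective (syndrome (ZMod p) f) := by
  rw [← LinearMap.range_eq_top, syndrome, Fintype.range_linearCombination]
  by_contra hspan
  obtain ⟨φ, hφ₀, hφ⟩ := Submodule.exists_le_ker_of_lt_top _ (lt_top_iff_ne_top.2 hspan)
  obtain ⟨a, b, c, rfl⟩ := codePairing_surjective φ
  have hword : pWord p m f a b c = 0 := funext fun x => by
    rw [pWord_eq_codePairing]
    exact hφ (Submodule.subset_span ⟨x, rfl⟩)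
  obtain ⟨rfl, rfl, rfl⟩ := eq_zero_of_pWord_eq_zero hf h₀ hword
  exact hφ₀ (by ext <;> simp [codePairing])

theorem ncard_pDual (hm : m ≠ 0) {f : 𝔽 → 𝔽} (hf : IsPerfectNonlinear f) (h₀ : f 0 = 0) :
    (pDual p m f).ncard = p ^ (p ^ m - 2 * m - 1) := by
  have hrank := LinearMap.finrank_range_add_finrank_ker (syndrome (ZMod p) f)
  rw [LinearMap.range_eq_top.2 (syndrome_surjective hf h₀), finrank_top, Module.finrank_prod,
    Module.finrank_prod, Module.finrank_self, GaloisField.finrank p hm,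
    Module.finrank_fintype_fun_eq_card, Fintype.card_eq_nat_card, GaloisField.card p m hm]
    at hrank
  have hpDual : pDual p m f = LinearMap.ker (syndrome (ZMod p) f) := Set.ext fun _ => mem_pDual_iff
  rw [hpDual, ← Nat.card_coe_set_eq, SetLike.coe_sort_coe,
    Module.natCard_eq_pow_finrank (K := ZMod p), Nat.card_zmod]
  congr 1
  omega

end Code

/-- For a prime `p ≥ 5`, `m ≥ 1` and `f` a PN-DO function on `F_{p^m}`,
the dual `C̄_f^⊥` of the punctured code is a `[p^m, p^m−2m−1, 4]` code over `F_p`: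
it has `p^(p^m−2m−1)` elements (dimension `p^m − 2m − 1`) and minimum Hamming
distance exactly `4`. -/
theorem stmt_11 (p m : ℕ) [Fact p.Prime] (hp : 5 ≤ p) (hm : 0 < m)
    (f : GaloisField p m → GaloisField p m)
    (hPN : ∀ a : GaloisField p m, a ≠ 0 → ∀ b : GaloisField p m,
      ∃! x : GaloisField p m, f (x + a) - f x = b)
    (δ : Fin m → Fin m → GaloisField p m)
    (hDO : ∀ x, f x = ∑ i : Fin m, ∑ j : Fin m, δ i j * x ^ (p ^ (i : ℕ) + p ^ (j : ℕ))) :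
    Set.ncard (pDual p m f) = p ^ (p ^ m - 2 * m - 1) ∧
    (∀ v ∈ pDual p m f, v ≠ 0 → 4 ≤ hammingNorm v) ∧
    (∃ v ∈ pDual p m f, hammingNorm v = 4) := by
  obtain rfl : f = QuadraticMap.dembowskiOstrom p δ :=
    funext fun x => (hDO x).trans (QuadraticMap.dembowskiOstrom_apply p δ x).symm
  have hQ := QuadraticMap.anisotropic_of_isPerfectNonlinear hPN
  have hcast : ∀ n : ℕ, 0 < n → n < 5 → (n : ZMod p) ≠ 0 := fun n hn h5 h =>
    absurd (Nat.le_of_dvd hn ((ZMod.natCast_eq_zero_iff n p).1 h)) (by omega)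
  obtain ⟨v, hv, hv₄⟩ :=
    exists_syndrome_eq_zero_hammingNorm_eq_four (QuadraticMap.dembowskiOstrom p δ)
      (by exact_mod_cast hcast 2 two_pos (by norm_num))
      (by exact_mod_cast hcast 3 three_pos (by norm_num)) (one_ne_zero (α := GaloisField p m))
  exact ⟨ncard_pDual hm.ne' hPN (map_zero _),
    fun v hv hv₀ => four_le_hammingNorm_of_syndrome_eq_zero hQ (mem_pDual_iff.1 hv) hv₀,
    v, mem_pDual_iff.2 hv, hv₄⟩
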